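/- Consider a deterministic node-oblivious decision rule vector (f, g, h) on the k-ary tree satisfying Assumptions 1, 2 and 3, with dependence graph of diameter d and constants η, τ₀, τ_d as in the assumptions; set τ* = max(τ₀, τ_d). Fix s ∈ {0,1} and for a node i at level τ define ζ_τ = min over μ ∈ M of P(σ_i = μ | s). Then there exists a constant C' = C'(f, m, k) < ∞ such that for every a ∈ ℕ ∪ {0} and every b ∈ {0, 1, …, d−1}, ζ_{τ* + a·d + b} ≥ exp( −C'·(k^d − 1)^a ); indeed the stronger bound −log ζ_{τ* + a·d + b} ≤ C'·(k^d − 1)^a − log(1/η)/(k^d − 2) holds. -/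

import Mathlib

/-!
Let `ζ_τ` be the least message probability at level `τ`. Strong connectivity makes `f`
surjective, so `ζ_{τ+1} ≥ ζ_τ ^ k`. Following a path of length `n ≤ d` in the dependence
graph from any message `μ` to the message `ν` that keeps probability `> η`, the probability
of `μ` at level `τ + d` is at least `η · ζ_τ ^ (k^d - 1)`. Hence `w_τ = -log ζ_τ` satisfies
`w_{τ+d} ≤ log (1/η) + (k^d - 1) w_τ`, so `w_τ + log (1/η) / (k^d - 2)` grows at most
geometrically with ratio `k^d - 1` along the levels `τ* + a d`; the `b < d` intermediate
levels cost at most a further factor `k^d`. Assumption 2 transfers from `s = 0` to `s = 1`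
because the support of every message distribution depends only on the support of the
signal law.
-/

/-- `p` is an everywhere-positive probability distribution on the finite set `X`. -/
def IsPositiveDist {X : Type} [Fintype X] (p : X → ℝ) : Prop :=
  (∀ x, 0 < p x) ∧ ∑ x, p x = 1

/-- Message distribution at a node of level `τ` (distance `τ` from the leaves) for the
node-oblivious deterministic rule vector with leaf rule `g` and internal rule `f`,
when the private signals are i.i.d. with law `p`. -/
noncomputable def oblDist {X M : Type} [Fintype X] [Fintype M] [DecidableEq M] {k : ℕ}
    (p : X → ℝ) (g : X → M) (f : (Fin k → M) → M) : ℕ → M → ℝ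
  | 0, μ => ∑ x, if g x = μ then p x else 0
  | τ + 1, μ => ∑ σ : Fin k → M, if f σ = μ then ∏ i, oblDist p g f τ (σ i) else 0

/-- Root error probability `P(σ_root ≠ s)` (uniform prior on `s`) for the
node-oblivious protocol `(f, g, h)`; the root's children are at level `t`, so the
total depth is `t + 1` and there are `n = k^(t+1)` private signals. -/
noncomputable def oblErr {X M : Type} [Fintype X] [Fintype M] [DecidableEq M] {k : ℕ}
    (p₀ p₁ : X → ℝ) (g : X → M) (f : (Fin k → M) → M) (h : (Fin k → M) → Bool)
    (t : ℕ) : ℝ :=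
  (1 / 2) * (∑ σ : Fin k → M, if h σ = true then ∏ i, oblDist p₀ g f t (σ i) else 0) +
  (1 / 2) * (∑ σ : Fin k → M, if h σ = false then ∏ i, oblDist p₁ g f t (σ i) else 0)

/-- The dependence graph of `f`: there is a directed edge from `μ` to `ν` iff there is
an input vector `α ∈ Mᵏ` in which `ν` appears at least once and `f α = μ`. -/
def DepEdge {M : Type} {k : ℕ} (f : (Fin k → M) → M) (μ ν : M) : Prop :=
  ∃ α : Fin k → M, (∃ i, α i = ν) ∧ f α = μ

/-- `HasPath f n μ ν`: the dependence graph of `f` contains a directed path with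
exactly `n` edges from `μ` to `ν`. -/
def HasPath {M : Type} {k : ℕ} (f : (Fin k → M) → M) : ℕ → M → M → Prop
  | 0, μ, ν => μ = ν
  | n + 1, μ, ν => ∃ ξ, DepEdge f μ ξ ∧ HasPath f n ξ ν

/-- `d` is the diameter of the dependence graph of `f`: every ordered pair of distinct
vertices is joined by a directed path of length at most `d`, and some ordered pair of
distinct vertices has no directed path of length less than `d`. -/
def IsDiameter {M : Type} {k : ℕ} (f : (Fin k → M) → M) (d : ℕ) : Prop :=
  (∀ μ ν : M, μ ≠ ν → ∃ n, n ≤ d ∧ HasPath f n μ ν) ∧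
  (∃ μ ν : M, μ ≠ ν ∧ ∀ n, n < d → ¬HasPath f n μ ν)


section MessageDistribution

open Finset

variable {X M : Type} [Fintype X] [Fintype M] [DecidableEq M] {k : ℕ}
  {p q : X → ℝ} {g : X → M} {f : (Fin k → M) → M}

theorem oblDist_nonneg (hp : ∀ x, 0 ≤ p x) : ∀ τ μ, 0 ≤ oblDist p g f τ μ
  | 0, μ => sum_nonneg fun x _ => by split_ifs <;> simp [hp x]
  | τ + 1, μ => sum_nonneg fun σ _ => by
      split_ifs
      exacts [prod_nonneg fun i _ => oblDist_nonneg hp τ (σ i), le_rfl]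

theorem sum_oblDist (hp : ∑ x, p x = 1) : ∀ τ, ∑ μ, oblDist p g f τ μ = 1
  | 0 => by simpa [oblDist, sum_comm (γ := M)] using hp
  | τ + 1 => by
      simp [oblDist, sum_comm (γ := M), ← Fintype.prod_sum, sum_oblDist hp τ]

theorem oblDist_le_one (hp₀ : ∀ x, 0 ≤ p x) (hp₁ : ∑ x, p x = 1) (τ : ℕ) (μ : M) :
    oblDist p g f τ μ ≤ 1 :=
  sum_oblDist (g := g) (f := f) hp₁ τ ▸
    single_le_sum (fun ν _ => oblDist_nonneg hp₀ τ ν) (mem_univ μ)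

theorem prod_le_oblDist_succ (hp : ∀ x, 0 ≤ p x) (τ : ℕ) {α : Fin k → M} {μ : M}
    (hα : f α = μ) : ∏ i, oblDist p g f τ (α i) ≤ oblDist p g f (τ + 1) μ := by
  have hnn : ∀ σ ∈ univ, 0 ≤ if f σ = μ then ∏ i, oblDist p g f τ (σ i) else 0 :=
    fun σ _ => by
      split_ifs
      exacts [prod_nonneg fun i _ => oblDist_nonneg hp τ (σ i), le_rfl]
  simpa [oblDist, hα] using single_le_sum hnn (mem_univ α)

theorem oblDist_zero_pos_iff (hp : ∀ x, 0 < p x) {μ : M} :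
    0 < oblDist p g f 0 μ ↔ ∃ x, g x = μ := by
  rw [oblDist, sum_pos_iff_of_nonneg fun x _ => by split_ifs <;> simp [(hp x).le]]
  refine exists_congr fun x => ?_
  split_ifs with hx <;> simp [hx, hp x]

theorem oblDist_succ_pos_iff (hp : ∀ x, 0 ≤ p x) {τ : ℕ} {μ : M} :
    0 < oblDist p g f (τ + 1) μ ↔ ∃ α, f α = μ ∧ ∀ i, 0 < oblDist p g f τ (α i) := by
  have hprod (α : Fin k → M) :
      0 < ∏ i, oblDist p g f τ (α i) ↔ ∀ i, 0 < oblDist p g f τ (α i) := by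
    simp only [(prod_nonneg fun i _ => oblDist_nonneg hp τ (α i)).lt_iff_ne',
      (oblDist_nonneg hp τ _).lt_iff_ne', ne_eq, prod_eq_zero_iff, mem_univ, true_and,
      not_exists]
  rw [oblDist, sum_pos_iff_of_nonneg fun α _ => by
    split_ifs
    exacts [prod_nonneg fun i _ => oblDist_nonneg hp τ (α i), le_rfl]]
  refine exists_congr fun α => ?_
  split_ifs with hα <;> simp [hα, hprod]

theorem oblDist_pos_iff_of_pos (hp : ∀ x, 0 < p x) (hq : ∀ x, 0 < q x) :
    ∀ τ μ, 0 < oblDist p g f τ μ ↔ 0 < oblDist q g f τ μ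
  | 0, μ => by rw [oblDist_zero_pos_iff hp, oblDist_zero_pos_iff hq]
  | τ + 1, μ => by
      simp only [oblDist_succ_pos_iff fun x => (hp x).le,
        oblDist_succ_pos_iff fun x => (hq x).le, oblDist_pos_iff_of_pos hp hq τ]

theorem oblDist_pos_of_le (hp : ∀ x, 0 ≤ p x) (hf : Function.Surjective f) {τ₀ τ : ℕ}
    (hτ : τ₀ ≤ τ) (hpos : ∀ μ, 0 < oblDist p g f τ₀ μ) : ∀ μ, 0 < oblDist p g f τ μ := by
  induction τ, hτ using Nat.le_induction with
  | base => exact hpos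
  | succ τ _ ih =>
    intro μ
    obtain ⟨α, hα⟩ := hf μ
    exact (oblDist_succ_pos_iff hp).2 ⟨α, hα, fun i => ih (α i)⟩

end MessageDistribution

theorem surjective_of_forall_hasPath {M : Type} {k : ℕ} {f : (Fin k → M) → M}
    (hf : ∀ μ ν : M, μ ≠ ν → ∃ n, HasPath f n μ ν) : Function.Surjective f := by
  intro μ
  by_cases hother : ∃ ν, ν ≠ μ
  · obtain ⟨ν, hν⟩ := hother
    obtain ⟨n | n, hpath⟩ := hf μ ν hν.symm
    · exact absurd hpath hν.symm
    · obtain ⟨_, ⟨α, -, hα⟩, -⟩ := hpath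
      exact ⟨α, hα⟩
  · push Not at hother
    exact ⟨fun _ => μ, hother _⟩

section LeastMessageProbability

open Finset

variable {X M : Type} [Fintype X] [Fintype M] [DecidableEq M] [Nonempty M] {k : ℕ}
  {p : X → ℝ} {g : X → M} {f : (Fin k → M) → M}

noncomputable def minOblDist (p : X → ℝ) (g : X → M) (f : (Fin k → M) → M) (τ : ℕ) : ℝ :=
  univ.inf' univ_nonempty (oblDist p g f τ)

theorem minOblDist_le (τ : ℕ) (μ : M) : minOblDist p g f τ ≤ oblDist p g f τ μ :=
  inf'_le _ (mem_univ μ)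

theorem le_minOblDist_iff {τ : ℕ} {z : ℝ} :
    z ≤ minOblDist p g f τ ↔ ∀ μ, z ≤ oblDist p g f τ μ := by
  simp [minOblDist]

theorem minOblDist_nonneg (hp : ∀ x, 0 ≤ p x) (τ : ℕ) : 0 ≤ minOblDist p g f τ :=
  le_minOblDist_iff.2 (oblDist_nonneg hp τ)

theorem minOblDist_pos {τ : ℕ} (hpos : ∀ μ, 0 < oblDist p g f τ μ) :
    0 < minOblDist p g f τ :=
  (lt_inf'_iff _).2 fun μ _ => hpos μ

theorem minOblDist_le_one (hp₀ : ∀ x, 0 ≤ p x) (hp₁ : ∑ x, p x = 1) (τ : ℕ) :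
    minOblDist p g f τ ≤ 1 :=
  (minOblDist_le τ (Classical.arbitrary M)).trans (oblDist_le_one hp₀ hp₁ τ _)

theorem minOblDist_pow_le_succ (hp : ∀ x, 0 ≤ p x) (hf : Function.Surjective f) (τ : ℕ) :
    minOblDist p g f τ ^ k ≤ minOblDist p g f (τ + 1) := by
  refine le_minOblDist_iff.2 fun μ => ?_
  obtain ⟨α, hα⟩ := hf μ
  calc minOblDist p g f τ ^ k = ∏ _i : Fin k, minOblDist p g f τ := by simp
    _ ≤ ∏ i, oblDist p g f τ (α i) :=
        prod_le_prod (fun _ _ => minOblDist_nonneg hp τ) fun i _ => minOblDist_le τ (α i)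
    _ ≤ oblDist p g f (τ + 1) μ := prod_le_oblDist_succ hp τ hα

theorem minOblDist_pow_le_add (hp : ∀ x, 0 ≤ p x) (hf : Function.Surjective f) (τ : ℕ) :
    ∀ r, minOblDist p g f τ ^ k ^ r ≤ minOblDist p g f (τ + r)
  | 0 => by simp
  | r + 1 =>
    calc minOblDist p g f τ ^ k ^ (r + 1) = (minOblDist p g f τ ^ k ^ r) ^ k := by
          rw [pow_succ, pow_mul]
      _ ≤ minOblDist p g f (τ + r) ^ k :=
          pow_le_pow_left₀ (pow_nonneg (minOblDist_nonneg hp τ) _)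
            (minOblDist_pow_le_add hp hf τ r) k
      _ ≤ minOblDist p g f (τ + (r + 1)) := minOblDist_pow_le_succ hp hf (τ + r)

theorem oblDist_mul_minOblDist_pow_le_of_depEdge (hp : ∀ x, 0 ≤ p x) {μ ν : M}
    (he : DepEdge f μ ν) (τ : ℕ) :
    oblDist p g f τ ν * minOblDist p g f τ ^ (k - 1) ≤ oblDist p g f (τ + 1) μ := by
  obtain ⟨α, ⟨i₀, rfl⟩, rfl⟩ := he
  calc oblDist p g f τ (α i₀) * minOblDist p g f τ ^ (k - 1)
        = oblDist p g f τ (α i₀) * ∏ _i ∈ univ.erase i₀, minOblDist p g f τ := by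
          simp [card_erase_of_mem]
    _ ≤ oblDist p g f τ (α i₀) * ∏ i ∈ univ.erase i₀, oblDist p g f τ (α i) :=
          mul_le_mul_of_nonneg_left (prod_le_prod (fun _ _ => minOblDist_nonneg hp τ)
            fun i _ => minOblDist_le τ (α i)) (oblDist_nonneg hp τ _)
    _ = ∏ i, oblDist p g f τ (α i) :=
        mul_prod_erase _ (fun i => oblDist p g f τ (α i)) (mem_univ i₀)
    _ ≤ oblDist p g f (τ + 1) (f α) := prod_le_oblDist_succ hp τ rfl

theorem oblDist_mul_minOblDist_pow_le_of_hasPath (hp : ∀ x, 0 ≤ p x)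
    (hf : Function.Surjective f) :
    ∀ n {μ ν : M}, HasPath f n μ ν → ∀ τ,
      oblDist p g f τ ν * minOblDist p g f τ ^ (k ^ n - 1) ≤ oblDist p g f (τ + n) μ
  | 0, μ, ν, hpath, τ => by
      obtain rfl : μ = ν := hpath
      simp
  | n + 1, μ, ν, ⟨ξ, he, hpath⟩, τ => by
      have hk : 0 < k := by
        obtain ⟨-, ⟨i, -⟩, -⟩ := he
        exact i.pos
      have hexp : k ^ (n + 1) - 1 = (k ^ n - 1) + k ^ n * (k - 1) := by
        have := Nat.one_le_pow n k hk
        have := Nat.le_mul_of_pos_right (k ^ n) hk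
        rw [pow_succ, Nat.mul_sub_one]
        omega
      have hζ := minOblDist_nonneg (g := g) (f := f) hp τ
      calc oblDist p g f τ ν * minOblDist p g f τ ^ (k ^ (n + 1) - 1)
          = oblDist p g f τ ν * minOblDist p g f τ ^ (k ^ n - 1) *
              (minOblDist p g f τ ^ k ^ n) ^ (k - 1) := by
            rw [hexp, pow_add, pow_mul, mul_assoc]
        _ ≤ oblDist p g f (τ + n) ξ * minOblDist p g f (τ + n) ^ (k - 1) :=
            mul_le_mul (oblDist_mul_minOblDist_pow_le_of_hasPath hp hf n hpath τ)
              (pow_le_pow_left₀ (pow_nonneg hζ _) (minOblDist_pow_le_add hp hf τ n) _)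
              (by positivity) (oblDist_nonneg hp _ _)
        _ ≤ oblDist p g f (τ + (n + 1)) μ :=
            oblDist_mul_minOblDist_pow_le_of_depEdge hp he (τ + n)

theorem mul_minOblDist_pow_le_minOblDist_add (hp₀ : ∀ x, 0 ≤ p x) (hp₁ : ∑ x, p x = 1)
    (hk : 0 < k) (hf : Function.Surjective f) {d τ : ℕ} {ν : M} {η : ℝ}
    (hreach : ∀ μ, ∃ n ≤ d, HasPath f n μ ν) (hη : ∀ σ, τ ≤ σ → η ≤ oblDist p g f σ ν) :
    η * minOblDist p g f τ ^ (k ^ d - 1) ≤ minOblDist p g f (τ + d) := by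
  refine le_minOblDist_iff.2 fun μ => ?_
  obtain ⟨n, hnd, hpath⟩ := hreach μ
  have hζ := minOblDist_nonneg (g := g) (f := f) hp₀ τ
  have hexp : k ^ (d - n) * (k ^ n - 1) ≤ k ^ d - 1 := by
    have := Nat.one_le_pow (d - n) k hk
    rw [Nat.mul_sub_one, ← pow_add, Nat.sub_add_cancel hnd]
    omega
  calc η * minOblDist p g f τ ^ (k ^ d - 1)
      ≤ oblDist p g f (τ + (d - n)) ν * (minOblDist p g f τ ^ k ^ (d - n)) ^ (k ^ n - 1) := by
        rw [← pow_mul]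
        exact mul_le_mul (hη _ le_self_add)
          (pow_le_pow_of_le_one hζ (minOblDist_le_one hp₀ hp₁ τ) hexp)
          (pow_nonneg hζ _) (oblDist_nonneg hp₀ _ _)
    _ ≤ oblDist p g f (τ + (d - n)) ν * minOblDist p g f (τ + (d - n)) ^ (k ^ n - 1) := by
        gcongr
        · exact oblDist_nonneg hp₀ _ _
        · exact minOblDist_pow_le_add hp₀ hf τ (d - n)
    _ ≤ oblDist p g f (τ + (d - n) + n) μ :=
        oblDist_mul_minOblDist_pow_le_of_hasPath hp₀ hf n hpath _
    _ = oblDist p g f (τ + d) μ := by rw [add_assoc, Nat.sub_add_cancel hnd]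

theorem neg_log_minOblDist_nonneg (hp₀ : ∀ x, 0 ≤ p x) (hp₁ : ∑ x, p x = 1) (τ : ℕ) :
    0 ≤ -Real.log (minOblDist p g f τ) :=
  neg_nonneg.2 <| Real.log_nonpos (minOblDist_nonneg hp₀ τ) (minOblDist_le_one hp₀ hp₁ τ)

theorem neg_log_minOblDist_add_le (hp : ∀ x, 0 ≤ p x) (hf : Function.Surjective f)
    {τ : ℕ} (hζ : 0 < minOblDist p g f τ) (b : ℕ) :
    -Real.log (minOblDist p g f (τ + b)) ≤ (k : ℝ) ^ b * -Real.log (minOblDist p g f τ) := by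
  have := Real.log_le_log (pow_pos hζ _) (minOblDist_pow_le_add hp hf τ b)
  rw [Real.log_pow] at this
  push_cast at this
  linarith

theorem neg_log_minOblDist_add_le_of_reach (hp₀ : ∀ x, 0 ≤ p x) (hp₁ : ∑ x, p x = 1)
    (hk : 0 < k) (hf : Function.Surjective f) {d τ : ℕ} {ν : M} {η : ℝ} (hη₀ : 0 < η)
    (hreach : ∀ μ, ∃ n ≤ d, HasPath f n μ ν) (hη : ∀ σ, τ ≤ σ → η ≤ oblDist p g f σ ν)
    (hζ : 0 < minOblDist p g f τ) :
    -Real.log (minOblDist p g f (τ + d)) ≤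
      Real.log (1 / η) + ((k : ℝ) ^ d - 1) * -Real.log (minOblDist p g f τ) := by
  have := Real.log_le_log (by positivity)
    (mul_minOblDist_pow_le_minOblDist_add hp₀ hp₁ hk hf hreach hη)
  rw [Real.log_mul hη₀.ne' (pow_pos hζ _).ne', Real.log_pow,
    Nat.cast_sub (Nat.one_le_pow d k hk)] at this
  push_cast at this
  rw [one_div, Real.log_inv]
  linarith

end LeastMessageProbability

theorem exists_add_div_le_mul_pow {w : ℕ → ℝ} {q c : ℝ} (hq : 1 < q) (hc : 0 ≤ c)
    (hw : 0 ≤ w 0) (hrec : ∀ a, 0 < a → w (a + 1) ≤ c + q * w a) :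
    ∃ C, ∀ a, w a + c / (q - 1) ≤ C * q ^ a := by
  -- the shift by `c / (q - 1)` turns the affine recursion into a linear one
  set u := fun a => w a + c / (q - 1)
  have hu : ∀ a, 0 < a → u (a + 1) ≤ q * u a := by
    intro a ha
    have hc' : c + c / (q - 1) = q * (c / (q - 1)) := by
      field_simp [(sub_pos.2 hq).ne']
      ring
    simp only [u]
    linarith [hrec a ha]
  have hu₀ : 0 ≤ u 0 := add_nonneg hw (div_nonneg hc (sub_pos.2 hq).le)
  refine ⟨max (u 0) (u 1), fun a => ?_⟩
  induction a with
  | zero => simp [u]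
  | succ a ih =>
    rcases Nat.eq_zero_or_pos a with rfl | ha
    · calc u 1 ≤ max (u 0) (u 1) := le_max_right _ _
        _ ≤ max (u 0) (u 1) * q ^ (0 + 1) := by
          rw [zero_add, pow_one]
          exact le_mul_of_one_le_right (hu₀.trans (le_max_left _ _)) hq.le
    · calc u (a + 1) ≤ q * u a := hu a ha
        _ ≤ q * (max (u 0) (u 1) * q ^ a) := by gcongr
        _ = max (u 0) (u 1) * q ^ (a + 1) := by ring

theorem exists_subexponential_lower_bound_oblDist {X M : Type} [Fintype X] [Fintype M]
    [DecidableEq M] {k : ℕ} {p : X → ℝ} {g : X → M} {f : (Fin k → M) → M}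
    (hp : IsPositiveDist p) (hk : 0 < k) (hf : Function.Surjective f) {d τ₀ τd : ℕ} {ν : M}
    {η : ℝ} (hreach : ∀ μ, ∃ n ≤ d, HasPath f n μ ν) (hkd : 2 < k ^ d)
    (hpos : ∀ μ, 0 < oblDist p g f τ₀ μ) (hη : 0 < η)
    (hν : ∀ τ, τd < τ → η < oblDist p g f τ ν) :
    ∃ C' : ℝ, ∀ (a b : ℕ), b < d → ∀ μ : M,
      Real.exp (-C' * ((k : ℝ) ^ d - 1) ^ a) ≤ oblDist p g f (max τ₀ τd + a * d + b) μ ∧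
      -Real.log (oblDist p g f (max τ₀ τd + a * d + b) μ) ≤
        C' * ((k : ℝ) ^ d - 1) ^ a - Real.log (1 / η) / ((k : ℝ) ^ d - 2) := by
  have : Nonempty M := ⟨ν⟩
  have hp₀ : ∀ x, 0 ≤ p x := fun x => (hp.1 x).le
  set τs := max τ₀ τd
  set K : ℝ := (k : ℝ) ^ d
  set c := Real.log (1 / η)
  set w : ℕ → ℝ := fun τ => -Real.log (minOblDist p g f τ)
  have hd : 0 < d := Nat.pos_of_ne_zero (by rintro rfl; simp at hkd)
  have hK : 2 < K := by simp only [K]; exact_mod_cast hkd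
  have hpos' : ∀ τ, τ₀ ≤ τ → ∀ μ, 0 < oblDist p g f τ μ :=
    fun τ hτ => oblDist_pos_of_le hp₀ hf hτ hpos
  have hζ : ∀ τ, τ₀ ≤ τ → 0 < minOblDist p g f τ := fun τ hτ => minOblDist_pos (hpos' τ hτ)
  have hw : ∀ τ, 0 ≤ w τ := neg_log_minOblDist_nonneg hp₀ hp.2
  have hc : 0 ≤ c := Real.log_nonneg <| one_le_one_div hη <|
    (hν (τd + 1) τd.lt_succ_self).le.trans (oblDist_le_one hp₀ hp.2 _ _)
  have hc' : 0 ≤ c / (K - 2) := div_nonneg hc (by linarith)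
  obtain ⟨C, hC⟩ := exists_add_div_le_mul_pow (w := fun a => w (τs + a * d)) (q := K - 1)
    (by linarith) hc (hw _) fun a ha => by
      have := Nat.mul_pos ha hd
      rw [show τs + (a + 1) * d = τs + a * d + d by ring]
      exact neg_log_minOblDist_add_le_of_reach hp₀ hp.2 hk hf hη hreach
        (fun σ hσ => (hν σ (by omega)).le) (hζ _ (by omega))
  refine ⟨K * C, fun a b hb μ => ?_⟩
  have hlevel : τ₀ ≤ τs + a * d := by omega
  have hlog : -Real.log (oblDist p g f (τs + a * d + b) μ) ≤ K * C * (K - 1) ^ a - c / (K - 2) :=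
    calc -Real.log (oblDist p g f (τs + a * d + b) μ)
        ≤ w (τs + a * d + b) :=
          neg_le_neg (Real.log_le_log (hζ _ (by omega)) (minOblDist_le _ μ))
      _ ≤ (k : ℝ) ^ b * w (τs + a * d) := neg_log_minOblDist_add_le hp₀ hf (hζ _ hlevel) b
      _ ≤ K * w (τs + a * d) :=
          mul_le_mul_of_nonneg_right
            (pow_le_pow_right₀ (Nat.one_le_cast.2 hk) hb.le) (hw _)
      _ ≤ K * (C * (K - 1) ^ a - c / (K - 2)) := by
          have := hC a
          simp only [show K - 1 - 1 = K - 2 by ring] at this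
          gcongr
          linarith
      _ ≤ K * C * (K - 1) ^ a - c / (K - 2) := by nlinarith
  refine ⟨(Real.le_log_iff_exp_le (hpos' _ (by omega) μ)).1 ?_, hlog⟩
  linarith

theorem least_frequent_message_subexponential_decay_general
    (X M : Type) [Fintype X] [Fintype M] [DecidableEq M]
    (k : ℕ) (hk : 2 ≤ k)
    (p₀ p₁ : X → ℝ) (hp₀ : IsPositiveDist p₀) (hp₁ : IsPositiveDist p₁)
    (g : X → M) (f : (Fin k → M) → M)
    (d : ℕ) (hdiam : IsDiameter f d) (hkd : 2 < k ^ d)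
    (hA1 : ∀ μ ν : M, μ ≠ ν → ∃ n, HasPath f n μ ν)
    (τ₀ : ℕ) (hA2 : ∀ μ : M, 0 < oblDist p₀ g f τ₀ μ)
    (μm μp : M) (η : ℝ) (hη : 0 < η) (τd : ℕ)
    (hA3 : ∀ τ, τd < τ → η < oblDist p₀ g f τ μm ∧ η < oblDist p₁ g f τ μp)
    (s : Bool) :
    ∃ C' : ℝ, ∀ (a b : ℕ), b < d → ∀ μ : M,
      Real.exp (-C' * ((k : ℝ) ^ d - 1) ^ a) ≤
        oblDist (if s then p₁ else p₀) g f (max τ₀ τd + a * d + b) μ ∧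
      -Real.log (oblDist (if s then p₁ else p₀) g f (max τ₀ τd + a * d + b) μ) ≤
        C' * ((k : ℝ) ^ d - 1) ^ a - Real.log (1 / η) / ((k : ℝ) ^ d - 2) := by
  have hf := surjective_of_forall_hasPath hA1
  have hreach (ν : M) (μ : M) : ∃ n ≤ d, HasPath f n μ ν :=
    if hμ : μ = ν then ⟨0, d.zero_le, hμ⟩ else hdiam.1 μ ν hμ
  cases s with
  | false =>
    exact exists_subexponential_lower_bound_oblDist hp₀ (by omega) hf (hreach μm) hkd hA2 hη
      fun τ hτ => (hA3 τ hτ).1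
  | true =>
    exact exists_subexponential_lower_bound_oblDist hp₁ (by omega) hf (hreach μp) hkd
      (fun μ => (oblDist_pos_iff_of_pos hp₀.1 hp₁.1 τ₀ μ).1 (hA2 μ)) hη
      fun τ hτ => (hA3 τ hτ).2

/-- **Subexponential decay of the least-frequent message probability
(Lemma `subexp_decay`).**  Consider a deterministic node-oblivious rule vector
`(f, g, h)` satisfying the three irreducibility assumptions, with dependence graph of
diameter `d` (and `k^d > 2`), constants `η > 0`, `τ₀`, `τ_d` as in the assumptions,
and set `τ* = max τ₀ τ_d`.  Fix `s ∈ {0,1}` and let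
`ζ_τ = min_{μ ∈ M} P(σ_i = μ | s)` for a node `i` at level `τ`.  Then there is a
constant `C' = C'(f, m, k) < ∞` such that for every `a ∈ ℕ` and `b ∈ {0, …, d-1}`,
`ζ_{τ* + a d + b} ≥ exp (-C' (k^d - 1)^a)`; indeed the stronger bound
`-log ζ_{τ* + a d + b} ≤ C' (k^d - 1)^a - log (1/η) / (k^d - 2)` holds.
(Both bounds are stated for every message `μ`, which is equivalent to stating them
for the minimum `ζ`.) -/
theorem least_frequent_message_subexponential_decay
    (X M : Type) [Fintype X] [Fintype M] [DecidableEq M]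
    (k : ℕ) (hk : 2 ≤ k)
    (p₀ p₁ : X → ℝ) (hp₀ : IsPositiveDist p₀) (hp₁ : IsPositiveDist p₁)
    (g : X → M) (f : (Fin k → M) → M) (h : (Fin k → M) → Bool)
    (d : ℕ) (hdiam : IsDiameter f d) (hkd : 2 < k ^ d)
    (hA1 : ∀ μ ν : M, μ ≠ ν → ∃ n, HasPath f n μ ν)
    (τ₀ : ℕ) (hτ₀ : 0 < τ₀) (hA2 : ∀ μ : M, 0 < oblDist p₀ g f τ₀ μ)
    (μm μp : M) (η : ℝ) (hη : 0 < η) (τd : ℕ)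
    (hA3 : ∀ τ, τd < τ → η < oblDist p₀ g f τ μm ∧ η < oblDist p₁ g f τ μp)
    (s : Bool) :
    ∃ C' : ℝ, ∀ (a b : ℕ), b < d → ∀ μ : M,
      Real.exp (-C' * ((k : ℝ) ^ d - 1) ^ a) ≤
        oblDist (if s then p₁ else p₀) g f (max τ₀ τd + a * d + b) μ ∧
      -Real.log (oblDist (if s then p₁ else p₀) g f (max τ₀ τd + a * d + b) μ) ≤
        C' * ((k : ℝ) ^ d - 1) ^ a - Real.log (1 / η) / ((k : ℝ) ^ d - 2) :=
  least_frequent_message_subexponential_decay_general X M k hk p₀ p₁ hp₀ hp₁ g f d hdiam hkd hA1 τ₀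
    hA2 μm μp η hη τd hA3 s
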